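/- Let G be a finite simple graph on n vertices with maximum degree Δ, fix integers T ≥ 1 and P ≥ 1, set M = Δ·T²/P, and assume M > 0. Assign to each vertex u an independent random color list L_u : Fin T → Fin P (all coordinates of all lists mutually independent, each uniform on Fin P), and let the conflict graph G_c have the same vertex set as G with an edge {u,v} whenever {u,v} is an edge of G and range L_u ∩ range L_v ≠ ∅. Then with probability at least 1 − n·exp(−M/3), every vertex of G_c has degree at most 2M in G_c, and consequently G_c has at most n·M edges. -/

import Mathlib

open MeasureTheory ProbabilityTheory

/-- Given a simple graph `G` and color lists `L u : Fin T → Fin P`, the conflict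
graph is the spanning subgraph of `G` whose edges are exactly the edges `{u,v}`
of `G` whose two color lists have intersecting ranges. -/
def conflictGraph {V : Type*} (G : SimpleGraph V) {T P : ℕ}
    (L : V → Fin T → Fin P) : SimpleGraph V where
  Adj u v := G.Adj u v ∧ ∃ i j, L u i = L v j
  symm := by
    constructor
    rintro u v ⟨h, i, j, hij⟩
    exact ⟨h.symm, j, i, hij.symm⟩
  loopless := by
    constructor
    rintro v ⟨h, -⟩
    exact G.loopless.irrefl v h

open Finset in
open scoped Classical in
lemma aux_card_coord {T P : ℕ} (hT : 1 ≤ T) (j : Fin T) (c : Fin P) :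
    (univ.filter fun g : Fin T → Fin P => g j = c).card * P = P ^ T := by
  have h1 : (univ.filter fun g : Fin T → Fin P => g j = c)
      = Fintype.piFinset (fun k : Fin T => if k = j then {c} else univ) := by
    ext g
    simp only [mem_filter, mem_univ, true_and, Fintype.mem_piFinset]
    constructor
    · rintro rfl k
      split <;> simp_all
    · intro h
      have := h j
      simpa using this
  rw [h1, Fintype.card_piFinset]
  have h2 : ∀ k : Fin T, ((if k = j then ({c} : Finset (Fin P)) else univ)).card
      = if k = j then 1 else P := by
    intro k; split <;> simp
  simp only [h2]
  rw [← Finset.mul_prod_erase univ _ (mem_univ j), if_pos rfl, one_mul]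
  rw [Finset.prod_congr rfl (fun x hx => if_neg (Finset.ne_of_mem_erase hx))]
  rw [Finset.prod_const, Finset.card_erase_of_mem (mem_univ j), card_univ, Fintype.card_fin]
  rw [← pow_succ, Nat.sub_add_cancel hT]

open Finset in
open scoped Classical in
lemma aux_card_conflict {T P : ℕ} (hT : 1 ≤ T) (hP : 1 ≤ P) (ℓ : Fin T → Fin P) :
    ((univ.filter fun g : Fin T → Fin P => ∃ i j, ℓ i = g j).card : ℝ) ≤
      (T : ℝ) ^ 2 * (P : ℝ) ^ T / P := by
  have hP0 : (0:ℝ) < P := by exact_mod_cast hP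
  rw [le_div_iff₀ hP0]
  have hsub : (univ.filter fun g : Fin T → Fin P => ∃ i j, ℓ i = g j) ⊆
      (univ : Finset (Fin T × Fin T)).biUnion
        (fun p => univ.filter fun g : Fin T → Fin P => g p.2 = ℓ p.1) := by
    intro g hg
    simp only [mem_filter, mem_univ, true_and] at hg
    obtain ⟨i, j, hij⟩ := hg
    exact Finset.mem_biUnion.mpr ⟨(i, j), mem_univ _, by simp [hij.symm]⟩
  have hcard : (univ.filter fun g : Fin T → Fin P => ∃ i j, ℓ i = g j).card ≤
      ∑ p : Fin T × Fin T, (univ.filter fun g : Fin T → Fin P => g p.2 = ℓ p.1).card :=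
    le_trans (Finset.card_le_card hsub) (Finset.card_biUnion_le)
  have key : ∀ p : Fin T × Fin T,
      ((univ.filter fun g : Fin T → Fin P => g p.2 = ℓ p.1).card : ℝ) * P = (P:ℝ) ^ T := by
    intro p
    exact_mod_cast congrArg (Nat.cast : ℕ → ℝ) (aux_card_coord hT p.2 (ℓ p.1))
  calc ((univ.filter fun g : Fin T → Fin P => ∃ i j, ℓ i = g j).card : ℝ) * P
      ≤ (∑ p : Fin T × Fin T, ((univ.filter fun g : Fin T → Fin P => g p.2 = ℓ p.1).card : ℝ)) * P := by
        apply mul_le_mul_of_nonneg_right _ hP0.le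
        exact_mod_cast hcard
    _ = ∑ p : Fin T × Fin T, ((univ.filter fun g : Fin T → Fin P => g p.2 = ℓ p.1).card : ℝ) * P := by
        rw [Finset.sum_mul]
    _ = ∑ _p : Fin T × Fin T, (P:ℝ) ^ T := by
        exact Finset.sum_congr rfl (fun p _ => key p)
    _ = (T:ℝ)^2 * (P:ℝ)^T := by
        rw [Finset.sum_const, Finset.card_univ, Fintype.card_prod, Fintype.card_fin,
          nsmul_eq_mul]
        push_cast
        ring


lemma aux_atom {Ω V : Type*} [MeasurableSpace Ω] (μ : Measure Ω) [Fintype V] {T P : ℕ}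
    (L : Ω → V → Fin T → Fin P)
    (hindep : iIndepFun
      (fun (p : V × Fin T) (ω : Ω) => L ω p.1 p.2) μ)
    (hunif : ∀ (u : V) (i : Fin T) (c : Fin P),
      μ {ω | L ω u i = c} = (P : ENNReal)⁻¹)
    (f : V → Fin T → Fin P) :
    μ {ω | L ω = f} = (P : ENNReal)⁻¹ ^ (Fintype.card V * T) := by
  have hset : {ω | L ω = f} = ⋂ p : V × Fin T, {ω | L ω p.1 p.2 = f p.1 p.2} := by
    ext ω
    simp only [Set.mem_setOf_eq, Set.mem_iInter, Prod.forall]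
    constructor
    · rintro rfl u i; rfl
    · intro h; funext u i; exact h u i
  have hmi := hindep.meas_iInter (s := fun p : V × Fin T => {ω | L ω p.1 p.2 = f p.1 p.2})
    (fun p => ⟨{f p.1 p.2}, measurableSet_singleton _, rfl⟩)
  rw [hset, hmi]
  have : ∀ p : V × Fin T, μ {ω | L ω p.1 p.2 = f p.1 p.2} = (P : ENNReal)⁻¹ := fun p =>
    hunif p.1 p.2 (f p.1 p.2)
  rw [Finset.prod_congr rfl (fun p _ => this p), Finset.prod_const, Finset.card_univ,
    Fintype.card_prod, Fintype.card_fin]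

open Finset in
open scoped Classical in
lemma aux_event {Ω V : Type*} [MeasurableSpace Ω] (μ : Measure Ω) [Fintype V] {T P : ℕ}
    (L : Ω → V → Fin T → Fin P)
    (hmeas : ∀ (u : V) (i : Fin T), Measurable (fun ω => L ω u i))
    (hindep : iIndepFun
      (fun (p : V × Fin T) (ω : Ω) => L ω p.1 p.2) μ)
    (hunif : ∀ (u : V) (i : Fin T) (c : Fin P),
      μ {ω | L ω u i = c} = (P : ENNReal)⁻¹)
    (pred : (V → Fin T → Fin P) → Prop) :
    μ {ω | pred (L ω)} =
      ((univ.filter pred).card : ENNReal) * (P : ENNReal)⁻¹ ^ (Fintype.card V * T) := by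
  have hset : {ω | pred (L ω)} = ⋃ f ∈ univ.filter pred, {ω | L ω = f} := by
    ext ω
    simp only [Set.mem_setOf_eq, Set.mem_iUnion, mem_filter, mem_univ, true_and]
    constructor
    · intro h; exact ⟨L ω, h, rfl⟩
    · rintro ⟨f, hf, h⟩; rw [h]; exact hf
  have hmeasatom : ∀ f : V → Fin T → Fin P, MeasurableSet {ω | L ω = f} := by
    intro f
    have : {ω | L ω = f} = ⋂ p : V × Fin T, (fun ω => L ω p.1 p.2) ⁻¹' {f p.1 p.2} := by
      ext ω
      simp only [Set.mem_setOf_eq, Set.mem_iInter, Set.mem_preimage, Set.mem_singleton_iff,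
        Prod.forall]
      constructor
      · rintro rfl u i; rfl
      · intro h; funext u i; exact h u i
    rw [this]
    exact MeasurableSet.iInter fun p => (hmeas p.1 p.2) (measurableSet_singleton _)
  rw [hset, measure_biUnion_finset ?_ (fun f _ => hmeasatom f)]
  · rw [Finset.sum_congr rfl (fun f _ => aux_atom μ L hindep hunif f), Finset.sum_const,
      nsmul_eq_mul]
  · intro f _ g _ hfg
    apply Set.disjoint_left.mpr
    intro ω hf hg
    exact hfg (hf.symm.trans hg)

open Finset in
open scoped Classical in
/-- per-vertex Chernoff counting bound -/
lemma aux_vertex {V : Type*} [Fintype V] (G : SimpleGraph V) [DecidableRel G.Adj]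
    {T P : ℕ} (hT : 1 ≤ T) (hP : 1 ≤ P) {M : ℝ}
    (hM : M = (G.maxDegree : ℝ) * (T : ℝ) ^ 2 / P) (hM0 : 0 < M) (v : V) :
    ((univ.filter fun f : V → Fin T → Fin P =>
        2 * M < ((conflictGraph G f).degree v : ℝ)).card : ℝ) ≤
      Real.exp (-M / 3) * (P : ℝ) ^ (Fintype.card V * T) := by
  have hP0 : (0:ℝ) < P := by exact_mod_cast hP
  set N := G.neighborFinset v with hN
  have hvN : v ∉ N := by simp [hN]
  have hNsub : N ⊆ univ.erase v := by
    intro u hu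
    exact mem_erase.mpr ⟨fun h => hvN (h ▸ hu), mem_univ u⟩
  set q : ℝ := (T:ℝ)^2 / P with hq
  have hq0 : 0 ≤ q := by positivity
  -- step 1 : degree as a filter card
  have hdeg : ∀ f : V → Fin T → Fin P, (conflictGraph G f).degree v
      = (N.filter fun u => ∃ i j, f v i = f u j).card := by
    intro f
    show ((conflictGraph G f).neighborFinset v).card = _
    congr 1
    ext u
    simp only [SimpleGraph.mem_neighborFinset]
    simp [conflictGraph, hN]
  -- step 2 : 2 ^ degree as a product
  have hpow : ∀ f : V → Fin T → Fin P, (2:ℝ) ^ ((conflictGraph G f).degree v)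
      = ∏ u ∈ N, (if (∃ i j, f v i = f u j) then (2:ℝ) else 1) := by
    intro f
    rw [hdeg f, Finset.prod_ite, Finset.prod_const, Finset.prod_const, one_pow, mul_one]
  -- the weight function
  set w : (Fin T → Fin P) → V → (Fin T → Fin P) → ℝ := fun ℓ u g =>
    if u = v then (if g = ℓ then 1 else 0)
    else if u ∈ N then (if (∃ i j, ℓ i = g j) then 2 else 1) else 1 with hw
  have hw0 : ∀ ℓ u g, 0 ≤ w ℓ u g := by
    intro ℓ u g
    simp only [hw]
    split <;> split <;> try norm_num
    split <;> norm_num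
  -- step 3 : sum over all f of 2 ^ degree
  have hswap : ∑ f : V → Fin T → Fin P, (2:ℝ) ^ ((conflictGraph G f).degree v)
      = ∑ ℓ : Fin T → Fin P, ∏ u : V, (∑ g : Fin T → Fin P, w ℓ u g) := by
    have h1 : ∀ ℓ : Fin T → Fin P, ∏ u : V, (∑ g : Fin T → Fin P, w ℓ u g)
        = ∑ f : V → Fin T → Fin P, ∏ u : V, w ℓ u (f u) :=
      fun ℓ => Fintype.prod_sum (fun u g => w ℓ u g)
    calc ∑ f : V → Fin T → Fin P, (2:ℝ) ^ ((conflictGraph G f).degree v)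
        = ∑ f : V → Fin T → Fin P, ∑ ℓ : Fin T → Fin P, ∏ u : V, w ℓ u (f u) := by
          refine Finset.sum_congr rfl (fun f _ => ?_)
          have hprod : ∀ ℓ : Fin T → Fin P, ∏ u : V, w ℓ u (f u)
              = (if f v = ℓ then (1:ℝ) else 0) * ∏ u ∈ univ.erase v, w ℓ u (f u) := by
            intro ℓ
            rw [← Finset.mul_prod_erase univ _ (mem_univ v)]
            congr 1
            simp [hw]
          have hcollapse : ∀ ℓ : Fin T → Fin P,
              (if f v = ℓ then (1:ℝ) else 0) * ∏ u ∈ univ.erase v, w ℓ u (f u)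
              = if f v = ℓ then ∏ u ∈ univ.erase v, w ℓ u (f u) else 0 := by
            intro ℓ; split <;> simp
          simp_rw [hprod, hcollapse]
          rw [Finset.sum_ite_eq univ (f v) (fun ℓ => ∏ u ∈ univ.erase v, w ℓ u (f u)),
            if_pos (mem_univ _)]
          rw [hpow f]
          have hcongr : ∏ u ∈ univ.erase v, w (f v) u (f u)
              = ∏ u ∈ univ.erase v,
                  (if u ∈ N then (if (∃ i j, f v i = f u j) then (2:ℝ) else 1) else 1) := by
            refine Finset.prod_congr rfl (fun u hu => ?_)
            simp only [hw]
            rw [if_neg (Finset.ne_of_mem_erase hu)]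
          rw [hcongr, ← Finset.prod_subset hNsub (fun u _ hu => if_neg hu)]
          exact Finset.prod_congr rfl (fun u hu => (if_pos hu).symm)
      _ = ∑ ℓ : Fin T → Fin P, ∑ f : V → Fin T → Fin P, ∏ u : V, w ℓ u (f u) :=
          Finset.sum_comm
      _ = ∑ ℓ : Fin T → Fin P, ∏ u : V, (∑ g : Fin T → Fin P, w ℓ u g) := by
          exact Finset.sum_congr rfl (fun ℓ _ => (h1 ℓ).symm)
  -- step 4 : bound the product for each ℓ
  set K : ℝ := ∏ u : V, (if u = v then (1:ℝ) else (P:ℝ)^T) with hK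
  have hfac : ∀ ℓ : Fin T → Fin P, ∏ u : V, (∑ g : Fin T → Fin P, w ℓ u g)
      ≤ Real.exp M * K := by
    intro ℓ
    have hcardβ : ∑ _g : Fin T → Fin P, (1:ℝ) = (P:ℝ)^T := by
      rw [Finset.sum_const, Finset.card_univ, Fintype.card_fun, Fintype.card_fin,
        Fintype.card_fin, nsmul_eq_mul, mul_one]
      push_cast
      rfl
    have hB : ∀ u : V, (∑ g : Fin T → Fin P, w ℓ u g)
        ≤ (if u = v then (1:ℝ) else (P:ℝ)^T) * (if u ∈ N then (1+q) else 1) := by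
      intro u
      by_cases huv : u = v
      · have huN : u ∉ N := by rw [huv]; exact hvN
        have h1 : (∑ g : Fin T → Fin P, w ℓ u g) = 1 := by
          simp [hw, huv]
        rw [h1, if_pos huv, if_neg huN, mul_one]
      · by_cases huN : u ∈ N
        · simp only [hw, if_neg huv, if_pos huN]
          have hb : ∀ g : Fin T → Fin P, (if (∃ i j, ℓ i = g j) then (2:ℝ) else 1)
              ≤ 1 + (if (∃ i j, ℓ i = g j) then (1:ℝ) else 0) := by
            intro g; split <;> norm_num
          calc (∑ g : Fin T → Fin P, if (∃ i j, ℓ i = g j) then (2:ℝ) else 1)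
              ≤ ∑ g : Fin T → Fin P, (1 + if (∃ i j, ℓ i = g j) then (1:ℝ) else 0) :=
                Finset.sum_le_sum (fun g _ => hb g)
            _ = (P:ℝ)^T + ((univ.filter fun g : Fin T → Fin P => ∃ i j, ℓ i = g j).card : ℝ) := by
                rw [Finset.sum_add_distrib, hcardβ, Finset.sum_boole]
            _ ≤ (P:ℝ)^T + (T:ℝ)^2 * (P:ℝ)^T / P :=
                (add_le_add_iff_left _).mpr (aux_card_conflict hT hP ℓ)
            _ = (P:ℝ)^T * (1 + q) := by rw [hq]; ring
        · have h1 : (∑ g : Fin T → Fin P, w ℓ u g) = (P:ℝ)^T := by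
            simp only [hw, if_neg huv, if_neg huN]
            exact hcardβ
          rw [h1, if_neg huv, if_neg huN, mul_one]
    calc ∏ u : V, (∑ g : Fin T → Fin P, w ℓ u g)
        ≤ ∏ u : V, ((if u = v then (1:ℝ) else (P:ℝ)^T) * (if u ∈ N then (1+q) else 1)) := by
          refine Finset.prod_le_prod (fun u _ => Finset.sum_nonneg (fun g _ => hw0 ℓ u g))
            (fun u _ => hB u)
      _ = K * ∏ u : V, (if u ∈ N then (1+q) else 1) := by
          rw [Finset.prod_mul_distrib, hK]
      _ = K * (1+q) ^ N.card := by
          congr 1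
          rw [Finset.prod_ite, Finset.prod_const, Finset.prod_const, one_pow, mul_one]
          congr 2
          ext u; simp
      _ ≤ K * Real.exp M := by
          have hK0 : 0 ≤ K := by
            apply Finset.prod_nonneg
            intro u _; split <;> positivity
          apply mul_le_mul_of_nonneg_left _ hK0
          have h1q : 1 + q ≤ Real.exp q := by
            have := Real.add_one_le_exp q
            linarith
          calc (1+q) ^ N.card ≤ (Real.exp q) ^ N.card := by
                apply pow_le_pow_left₀ (by linarith) h1q
            _ = Real.exp (N.card * q) := by
                rw [← Real.exp_nat_mul]
            _ ≤ Real.exp M := by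
                apply Real.exp_le_exp.mpr
                have hd : (N.card : ℝ) ≤ (G.maxDegree : ℝ) := by
                  exact_mod_cast G.degree_le_maxDegree v
                calc (N.card : ℝ) * q ≤ (G.maxDegree : ℝ) * q :=
                      mul_le_mul_of_nonneg_right hd hq0
                  _ = M := by rw [hM, hq]; ring
      _ = Real.exp M * K := mul_comm _ _
  -- step 5 : total bound on the sum
  have hKval : (P:ℝ)^T * K = (P:ℝ) ^ (Fintype.card V * T) := by
    have hKe : K = ((P:ℝ)^T) ^ (Fintype.card V - 1) := by
      rw [hK, ← Finset.mul_prod_erase univ _ (mem_univ v), if_pos rfl, one_mul]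
      rw [Finset.prod_congr rfl (fun u hu => if_neg (Finset.ne_of_mem_erase hu))]
      rw [Finset.prod_const, Finset.card_erase_of_mem (mem_univ v), card_univ]
    rw [hKe, ← pow_succ', Nat.sub_add_cancel (Fintype.card_pos_iff.mpr ⟨v⟩), ← pow_mul,
      mul_comm T]
  have htotal : ∑ f : V → Fin T → Fin P, (2:ℝ) ^ ((conflictGraph G f).degree v)
      ≤ Real.exp M * (P:ℝ) ^ (Fintype.card V * T) := by
    rw [hswap]
    calc ∑ ℓ : Fin T → Fin P, ∏ u : V, (∑ g : Fin T → Fin P, w ℓ u g)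
        ≤ ∑ _ℓ : Fin T → Fin P, Real.exp M * K :=
          Finset.sum_le_sum (fun ℓ _ => hfac ℓ)
      _ = (P:ℝ)^T * (Real.exp M * K) := by
          rw [Finset.sum_const, Finset.card_univ, Fintype.card_fun, Fintype.card_fin,
            Fintype.card_fin, nsmul_eq_mul]
          push_cast
          ring
      _ = Real.exp M * ((P:ℝ)^T * K) := by ring
      _ = Real.exp M * (P:ℝ) ^ (Fintype.card V * T) := by rw [hKval]
  -- step 6 : Markov
  set bad := univ.filter fun f : V → Fin T → Fin P =>
    2 * M < ((conflictGraph G f).degree v : ℝ) with hbad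
  have hlow : (bad.card : ℝ) * Real.exp (2 * M * Real.log 2)
      ≤ ∑ f : V → Fin T → Fin P, (2:ℝ) ^ ((conflictGraph G f).degree v) := by
    calc (bad.card : ℝ) * Real.exp (2 * M * Real.log 2)
        = ∑ _f ∈ bad, Real.exp (2 * M * Real.log 2) := by
          rw [Finset.sum_const, nsmul_eq_mul]
      _ ≤ ∑ f ∈ bad, (2:ℝ) ^ ((conflictGraph G f).degree v) := by
          refine Finset.sum_le_sum (fun f hf => ?_)
          rw [hbad, Finset.mem_filter] at hf
          have h2M : 2 * M ≤ ((conflictGraph G f).degree v : ℝ) := le_of_lt hf.2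
          calc Real.exp (2 * M * Real.log 2) = (2:ℝ) ^ (2*M : ℝ) := by
                rw [Real.rpow_def_of_pos (by norm_num : (0:ℝ) < 2)]
                ring_nf
            _ ≤ (2:ℝ) ^ (((conflictGraph G f).degree v : ℕ) : ℝ) :=
                Real.rpow_le_rpow_of_exponent_le (by norm_num) h2M
            _ = (2:ℝ) ^ ((conflictGraph G f).degree v) := Real.rpow_natCast 2 _
      _ ≤ ∑ f : V → Fin T → Fin P, (2:ℝ) ^ ((conflictGraph G f).degree v) := by
          apply Finset.sum_le_sum_of_subset_of_nonneg (Finset.filter_subset _ _)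
          intro f _ _
          positivity
  have hexp : Real.exp M / Real.exp (2 * M * Real.log 2) ≤ Real.exp (-M / 3) := by
    rw [← Real.exp_sub, Real.exp_le_exp]
    nlinarith [Real.log_two_gt_d9, hM0]
  have hE0 : (0:ℝ) < Real.exp (2 * M * Real.log 2) := Real.exp_pos _
  rw [← le_div_iff₀ hE0] at hlow
  calc (bad.card : ℝ)
      ≤ (∑ f : V → Fin T → Fin P, (2:ℝ) ^ ((conflictGraph G f).degree v))
          / Real.exp (2 * M * Real.log 2) := hlow
    _ ≤ (Real.exp M * (P:ℝ) ^ (Fintype.card V * T)) / Real.exp (2 * M * Real.log 2) := by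
        gcongr
    _ = (Real.exp M / Real.exp (2 * M * Real.log 2)) * (P:ℝ) ^ (Fintype.card V * T) := by
        ring
    _ ≤ Real.exp (-M / 3) * (P:ℝ) ^ (Fintype.card V * T) := by
        apply mul_le_mul_of_nonneg_right hexp (by positivity)


open scoped Classical in
/-- Let `G` be a finite simple graph on `n` vertices with maximum degree `Δ`,
`T, P ≥ 1`, `M = Δ·T²/P > 0`.  Assign to each vertex an independent random color
list (all coordinates mutually independent, each uniform on `Fin P`), and let
`G_c` be the corresponding conflict graph.  Then with probability at least
`1 − n·exp(−M/3)`, every vertex of `G_c` has degree at most `2M` in `G_c`, and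
consequently `G_c` has at most `n·M` edges. -/
theorem stmt_5 {Ω : Type*} [MeasurableSpace Ω] (μ : Measure Ω)
    [IsProbabilityMeasure μ] {V : Type*} [Fintype V] (G : SimpleGraph V)
    [DecidableRel G.Adj]
    (n : ℕ) (hn : n = Fintype.card V)
    (Δ : ℕ) (hΔ : Δ = G.maxDegree)
    (T P : ℕ) (hT : 1 ≤ T) (hP : 1 ≤ P)
    (M : ℝ) (hM : M = (Δ : ℝ) * (T : ℝ) ^ 2 / P) (hM0 : 0 < M)
    (L : Ω → V → Fin T → Fin P)
    (hmeas : ∀ (u : V) (i : Fin T), Measurable (fun ω => L ω u i))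
    (hindep : iIndepFun
      (fun (p : V × Fin T) (ω : Ω) => L ω p.1 p.2) μ)
    (hunif : ∀ (u : V) (i : Fin T) (c : Fin P),
      μ {ω | L ω u i = c} = (P : ENNReal)⁻¹) :
    1 - (n : ℝ) * Real.exp (-M / 3) ≤
      (μ {ω | (∀ v, ((conflictGraph G (L ω)).degree v : ℝ) ≤ 2 * M) ∧
        ((conflictGraph G (L ω)).edgeFinset.card : ℝ) ≤ (n : ℝ) * M}).toReal := by
  classical
  have hP0 : (0:ℝ) < P := by exact_mod_cast hP
  set m := Fintype.card V * T with hm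
  obtain ⟨pred, hpred⟩ : ∃ pred : (V → Fin T → Fin P) → Prop, pred = fun f =>
      (∀ v, ((conflictGraph G f).degree v : ℝ) ≤ 2 * M) ∧
        ((conflictGraph G f).edgeFinset.card : ℝ) ≤ (n : ℝ) * M := ⟨_, rfl⟩
  have hEset : {ω | (∀ v, ((conflictGraph G (L ω)).degree v : ℝ) ≤ 2 * M) ∧
        ((conflictGraph G (L ω)).edgeFinset.card : ℝ) ≤ (n : ℝ) * M}
      = {ω | pred (L ω)} := by rw [hpred]
  rw [hEset, aux_event μ L hmeas hindep hunif pred]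
  rw [ENNReal.toReal_mul, ENNReal.toReal_pow, ENNReal.toReal_inv, ENNReal.toReal_natCast,
    ENNReal.toReal_natCast]
  -- the second conjunct of `pred` follows from the first (handshake lemma)
  have himp : ∀ f : V → Fin T → Fin P,
      (∀ v, ((conflictGraph G f).degree v : ℝ) ≤ 2 * M) → pred f := by
    intro f h
    rw [hpred]
    refine ⟨h, ?_⟩
    have hhs := SimpleGraph.sum_degrees_eq_twice_card_edges (conflictGraph G f)
    have hhs' : (2:ℝ) * ((conflictGraph G f).edgeFinset.card : ℝ)
        = ∑ v : V, ((conflictGraph G f).degree v : ℝ) := by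
      exact_mod_cast hhs.symm
    have hsum : ∑ v : V, ((conflictGraph G f).degree v : ℝ)
        ≤ (Fintype.card V : ℝ) * (2 * M) := by
      calc ∑ v : V, ((conflictGraph G f).degree v : ℝ)
          ≤ ∑ _v : V, 2 * M := Finset.sum_le_sum (fun v _ => h v)
        _ = (Fintype.card V : ℝ) * (2 * M) := by
            rw [Finset.sum_const, Finset.card_univ, nsmul_eq_mul]
    rw [hn]
    linarith
  -- cardinality bookkeeping
  have hcards : ((Finset.univ.filter pred).card : ℝ)
      + ((Finset.univ.filter (fun f => ¬ pred f)).card : ℝ) = (P:ℝ) ^ m := by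
    have h1 : (Finset.univ.filter pred).card
        + (Finset.univ.filter (fun f => ¬ pred f)).card
        = Fintype.card (V → Fin T → Fin P) := by
      rw [Finset.card_filter_add_card_filter_not, Finset.card_univ]
    have h2 : Fintype.card (V → Fin T → Fin P) = P ^ m := by
      rw [Fintype.card_fun, Fintype.card_fun, Fintype.card_fin, Fintype.card_fin, ← pow_mul,
        hm, mul_comm]
    rw [h2] at h1
    exact_mod_cast h1
  -- union bound over vertices
  have hbadcard : ((Finset.univ.filter (fun f => ¬ pred f)).card : ℝ)
      ≤ (n : ℝ) * Real.exp (-M / 3) * (P:ℝ) ^ m := by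
    have hsub : Finset.univ.filter (fun f => ¬ pred f) ⊆
        Finset.univ.biUnion (fun v : V => Finset.univ.filter
          (fun f : V → Fin T → Fin P => 2 * M < ((conflictGraph G f).degree v : ℝ))) := by
      intro f hf
      rw [Finset.mem_filter] at hf
      by_contra hc
      simp only [Finset.mem_biUnion, Finset.mem_filter, Finset.mem_univ, true_and, not_exists,
        not_lt] at hc
      exact hf.2 (himp f hc)
    have hM' : M = (G.maxDegree : ℝ) * (T : ℝ) ^ 2 / P := by rw [hM, hΔ]
    calc ((Finset.univ.filter (fun f => ¬ pred f)).card : ℝ)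
        ≤ ((Finset.univ.biUnion (fun v : V => Finset.univ.filter
            (fun f : V → Fin T → Fin P =>
              2 * M < ((conflictGraph G f).degree v : ℝ)))).card : ℝ) := by
          exact_mod_cast Finset.card_le_card hsub
      _ ≤ ∑ v : V, ((Finset.univ.filter (fun f : V → Fin T → Fin P =>
              2 * M < ((conflictGraph G f).degree v : ℝ))).card : ℝ) := by
          exact_mod_cast Finset.card_biUnion_le
      _ ≤ ∑ _v : V, Real.exp (-M / 3) * (P:ℝ) ^ m :=
          Finset.sum_le_sum (fun v _ => aux_vertex G hT hP hM' hM0 v)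
      _ = (n : ℝ) * Real.exp (-M / 3) * (P:ℝ) ^ m := by
          rw [Finset.sum_const, Finset.card_univ, nsmul_eq_mul, hn]
          ring
  -- conclude
  have hR0 : (0:ℝ) < (P:ℝ) ^ m := by positivity
  rw [inv_pow, ← div_eq_mul_inv, le_div_iff₀ hR0]
  have hx : (1 - (n:ℝ) * Real.exp (-M / 3)) * (P:ℝ) ^ m
      = (P:ℝ) ^ m - (n:ℝ) * Real.exp (-M / 3) * (P:ℝ) ^ m := by ring
  rw [hx]
  linarith [hbadcard, hcards]
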